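/- In the setting of the Whitney decomposition 𝒲 of Q⁰ associated to the set E (with ε ≤ k₀/N for an absolute constant k₀): every Q ∈ 𝒲 satisfies δ_Q ≥ Δ/20. -/

import Mathlib

open MeasureTheory Set Metric
open scoped Classical

noncomputable section

abbrev Pt : Type := EuclideanSpace ℝ (Fin 2)

/-- The point `(a, b)` of the Euclidean plane. -/
def pt (a b : ℝ) : Pt := WithLp.toLp 2 ![a, b]

/-- `V` is an `N`-ary tree: a finite prefix-closed set of strings over the alphabet
`{0, …, N−1}` containing the empty string (the root), in which every non-leaf node
has at least `2` (and, automatically, at most `N`) children. -/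
def IsNaryTree (N : ℕ) (V : Finset (List ℕ)) : Prop :=
  [] ∈ V ∧
  (∀ v ∈ V, ∀ u : List ℕ, u <+: v → u ∈ V) ∧
  (∀ v ∈ V, ∀ i ∈ v, i < N) ∧
  (∀ v ∈ V, (∃ a : ℕ, v ++ [a] ∈ V) →
    2 ≤ ((Finset.range N).filter (fun a => v ++ [a] ∈ V)).card)

/-- `v` is a leaf of `V`. -/
def IsLeaf (V : Finset (List ℕ)) (v : List ℕ) : Prop :=
  v ∈ V ∧ ∀ a : ℕ, v ++ [a] ∉ V

/-- The tree has depth at least one, i.e. the root is not a leaf. -/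
def DepthAtLeastOne (V : Finset (List ℕ)) : Prop := ∃ a : ℕ, [a] ∈ V

/-- Radially decaying weights with parameter `ε` (with the convention `W ∅ = 1`). -/
def RadiallyDecaying (V : Finset (List ℕ)) (W : List ℕ → ℝ) (ε : ℝ) : Prop :=
  W [] = 1 ∧ (∀ v ∈ V, 0 < W v) ∧ ∀ v ∈ V, v ≠ [] → W v ≤ ε * W v.dropLast

/-- The map `Ψ(v) = ∑_{i=1}^{d(v)} W(π_{i−1}(v))·v_i/(N−1)`. -/
def Psi (N : ℕ) (W : List ℕ → ℝ) (v : List ℕ) : ℝ :=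
  ∑ i ∈ Finset.range v.length, W (v.take i) * (v.getD i 0 : ℝ) / ((N : ℝ) - 1)

/-- `Δ = min_{v ∈ ∂V} W_v`. -/
def Delta (V : Finset (List ℕ)) (W : List ℕ → ℝ) : ℝ :=
  sInf {w : ℝ | ∃ v, IsLeaf V v ∧ w = W v}

def E1set (Δ : ℝ) : Set Pt :=
  {x | (∃ n : ℤ, x 0 = (n : ℝ) * Δ) ∧ x 0 ∈ Ico (0 : ℝ) 2 ∧ x 1 = 0}

def E2set (N : ℕ) (V : Finset (List ℕ)) (W : List ℕ → ℝ) : Set Pt :=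
  {x | ∃ v, IsLeaf V v ∧ x = pt (Psi N W v) (W v)}

def Eset (N : ℕ) (V : Finset (List ℕ)) (W : List ℕ → ℝ) : Set Pt :=
  E1set (Delta V W) ∪ E2set N V W

/-- Bundle of standing hypotheses: `N ≥ 2`, `V` an `N`-ary tree, `0 < ε ≤ k₀/N`,
and radially decaying weights with parameter `ε`. -/
def TreeHyp (k₀ : ℝ) (N : ℕ) (V : Finset (List ℕ)) (W : List ℕ → ℝ) (ε : ℝ) : Prop :=
  2 ≤ N ∧ IsNaryTree N V ∧ 0 < ε ∧ ε ≤ k₀ / N ∧ RadiallyDecaying V W ε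

/-- Distance between two subsets of the plane. -/
def setDist (s t : Set Pt) : ℝ := sInf {d : ℝ | ∃ x ∈ s, ∃ y ∈ t, d = dist x y}

/-- A dyadic square arising from `Q⁰ = [−3,5)²` by `k` repeated bisections. -/
structure DSquare where
  k : ℕ
  i : ℕ
  j : ℕ
  hi : i < 2 ^ k
  hj : j < 2 ^ k

namespace DSquare

def side (Q : DSquare) : ℝ := 8 / 2 ^ Q.k

def x0 (Q : DSquare) : ℝ := -3 + Q.i * Q.side

def y0 (Q : DSquare) : ℝ := -3 + Q.j * Q.side

/-- The (half-open) square itself, as a subset of the plane. -/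
def set (Q : DSquare) : Set Pt :=
  {x | x 0 ∈ Ico Q.x0 (Q.x0 + Q.side) ∧ x 1 ∈ Ico Q.y0 (Q.y0 + Q.side)}

/-- The concentric dilate `λQ`. -/
def dil (Q : DSquare) (lam : ℝ) : Set Pt :=
  {x | |x 0 - (Q.x0 + Q.side / 2)| ≤ lam * Q.side / 2 ∧
       |x 1 - (Q.y0 + Q.side / 2)| ≤ lam * Q.side / 2}

/-- The dyadic ancestor of `Q` at generation `k' ≤ Q.k`. -/
def anc (Q : DSquare) (k' : ℕ) (h : k' ≤ Q.k) : DSquare :=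
  ⟨k', Q.i / 2 ^ (Q.k - k'), Q.j / 2 ^ (Q.k - k'), by
      have h2 : 0 < 2 ^ (Q.k - k') := pow_pos (by norm_num) _
      rw [Nat.div_lt_iff_lt_mul h2, ← pow_add, Nat.add_sub_cancel' h]
      exact Q.hi, by
      have h2 : 0 < 2 ^ (Q.k - k') := pow_pos (by norm_num) _
      rw [Nat.div_lt_iff_lt_mul h2, ← pow_add, Nat.add_sub_cancel' h]
      exact Q.hj⟩

end DSquare

def Q0set : Set Pt := {x | x 0 ∈ Ico (-3 : ℝ) 5 ∧ x 1 ∈ Ico (-3 : ℝ) 5}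

/-- `Q` belongs to the Whitney decomposition `𝒲` of `Q⁰` relative to `E`:
`3Q ∩ E` has at most one point, while `3Q'' ∩ E` has at least two points for every
proper dyadic ancestor `Q''` of `Q`. -/
def InWhitney (E : Set Pt) (Q : DSquare) : Prop :=
  (Q.dil 3 ∩ E).Subsingleton ∧
  ∀ k' : ℕ, ∀ h : k' < Q.k, ¬ ((Q.anc k' h.le).dil 3 ∩ E).Subsingleton

/-- `Q ↔ Q'`, i.e. `1.1Q ∩ 1.1Q' ≠ ∅`. -/
def Touch (Q Q' : DSquare) : Prop := (Q.dil 1.1 ∩ Q'.dil 1.1).Nonempty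

/-- `‖F‖_{L^{2,p}(Ω)}^p = ∫_Ω |∇²F|^p`. -/
def sobEnergy (p : ℝ) (Ω : Set Pt) (F : Pt → ℝ) : ℝ :=
  ∫ x in Ω, ‖iteratedFDeriv ℝ 2 F x‖ ^ p

/-- The seminorm `‖F‖_{L^{2,p}(Ω)}`. -/
def sobNorm (p : ℝ) (Ω : Set Pt) (F : Pt → ℝ) : ℝ := sobEnergy p Ω F ^ (1 / p)

/-- Membership in the homogeneous Sobolev space `L^{2,p}(ℝ²)` (we work with `C²`
representatives with finite seminorm). -/
def MemSob (p : ℝ) (F : Pt → ℝ) : Prop :=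
  ContDiff ℝ 2 F ∧ Integrable fun x => ‖iteratedFDeriv ℝ 2 F x‖ ^ p

/-- The trace seminorm `‖f‖_{L^{2,p}(E)}` of `f : E → ℝ`. -/
def traceSobNorm (p : ℝ) (E : Set Pt) (f : E → ℝ) : ℝ :=
  sInf {c : ℝ | ∃ F : Pt → ℝ, MemSob p F ∧ (∀ y : E, F y.1 = f y) ∧ c = sobNorm p univ F}

/-- `T` is a linear extension operator `L^{2,p}(E) → L^{2,p}(ℝ²)` with norm bound `M`. -/
def IsExtOpPlane (p : ℝ) (E : Set Pt) (M : ℝ) (T : (E → ℝ) →ₗ[ℝ] (Pt → ℝ)) : Prop :=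
  ∀ f : E → ℝ, (∃ F : Pt → ℝ, MemSob p F ∧ ∀ y : E, F y.1 = f y) →
    MemSob p (T f) ∧ (∀ y : E, T f y.1 = f y) ∧
      sobNorm p univ (T f) ≤ M * traceSobNorm p E f

/-- `‖Φ‖_{L^{1,p}(V)}^p = ∑_{v ∈ V₀} |Φ(v) − Φ(π(v))|^p W_v^{2−p}`. -/
def treeEnergy (p : ℝ) (V : Finset (List ℕ)) (W : List ℕ → ℝ) (Φ : List ℕ → ℝ) : ℝ :=
  ∑ v ∈ V.erase [], |Φ v - Φ v.dropLast| ^ p * W v ^ (2 - p)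

def treeNorm (p : ℝ) (V : Finset (List ℕ)) (W : List ℕ → ℝ) (Φ : List ℕ → ℝ) : ℝ :=
  treeEnergy p V W Φ ^ (1 / p)

/-- The type of leaves of `V`. -/
def Leaves (V : Finset (List ℕ)) : Type := {v : List ℕ // IsLeaf V v}

/-- The trace seminorm `‖φ‖_{L^{1,p}(∂V)}`. -/
def treeTraceNorm (p : ℝ) (V : Finset (List ℕ)) (W : List ℕ → ℝ) (φ : Leaves V → ℝ) : ℝ :=
  sInf {c : ℝ | ∃ Φ : List ℕ → ℝ, (∀ v : Leaves V, Φ v.1 = φ v) ∧ c = treeNorm p V W Φ}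

/-- `H` is a linear extension operator `L^{1,p}(∂V) → L^{1,p}(V)` with norm bound `M`. -/
def IsExtOpTree (p : ℝ) (V : Finset (List ℕ)) (W : List ℕ → ℝ) (M : ℝ)
    (H : (Leaves V → ℝ) →ₗ[ℝ] (List ℕ → ℝ)) : Prop :=
  ∀ φ : Leaves V → ℝ,
    (∀ v : Leaves V, H φ v.1 = φ v) ∧ treeNorm p V W (H φ) ≤ M * treeTraceNorm p V W φ

/-- Longest common prefix of two strings (the lowest common ancestor). -/
def lcp : List ℕ → List ℕ → List ℕ
  | a :: as, b :: bs => if a = b then a :: lcp as bs else []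
  | _, _ => []

/-- The cluster `C_v ⊆ E₂` associated to a vertex `v ∈ V`. -/
def Cluster (N : ℕ) (V : Finset (List ℕ)) (W : List ℕ → ℝ) (v : List ℕ) : Set Pt :=
  {x | ∃ u, IsLeaf V u ∧ v <+: u ∧ x = pt (Psi N W u) (W u)}

/-- The average `(∂₂G)_S` of the vertical derivative of `G` over `S`. -/
def d2avg (S : Set Pt) (G : Pt → ℝ) : ℝ :=
  ⨍ x in S, fderiv ℝ G x (EuclideanSpace.single 1 1)

end

/-!
Distinct points of `E` are at distance at least `Δ`: points of `E₁` are `Δ` apart, points of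
`E₂` lie at height at least `Δ` above `E₁`, and the `Ψ`-values of two leaves branching at a
vertex `p` differ by at least `W_p/(N−1) − 2εW_p ≥ εW_p ≥ Δ`, because the subtree below a child
of `p` moves `Ψ` by at most `2εW_p` (take `k₀ = 1/3`). A Whitney square `Q ≠ Q⁰` has a parent
whose triple contains two points of `E`, so `Δ ≤ diam 3Q⁺ ≤ 12 δ_Q`; and `Δ ≤ 1` handles `Q⁰`.
-/

lemma abs_sub_apply_le_dist (x y : Pt) (i : Fin 2) : |x i - y i| ≤ dist x y :=
  PiLp.dist_apply_le x y i

lemma dist_le_abs_sub_add_abs_sub (x y : Pt) : dist x y ≤ |x 0 - y 0| + |x 1 - y 1| := by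
  rw [EuclideanSpace.dist_eq, Fin.sum_univ_two, Real.dist_eq, Real.dist_eq,
    Real.sqrt_le_iff]
  refine ⟨by positivity, ?_⟩
  nlinarith [sq_abs (x 0 - y 0), sq_abs (x 1 - y 1), abs_nonneg (x 0 - y 0),
    abs_nonneg (x 1 - y 1)]

namespace DSquare

lemma side_pos (Q : DSquare) : 0 < Q.side := by
  unfold side
  positivity

lemma dist_le_of_mem_dil {Q : DSquare} {lam : ℝ} {x y : Pt} (hx : x ∈ Q.dil lam)
    (hy : y ∈ Q.dil lam) : dist x y ≤ 2 * lam * Q.side := by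
  obtain ⟨hx0, hx1⟩ := hx
  obtain ⟨hy0, hy1⟩ := hy
  have h0 := abs_sub_le (x 0) (Q.x0 + Q.side / 2) (y 0)
  have h1 := abs_sub_le (x 1) (Q.y0 + Q.side / 2) (y 1)
  rw [abs_sub_comm (Q.x0 + Q.side / 2)] at h0
  rw [abs_sub_comm (Q.y0 + Q.side / 2)] at h1
  linarith [dist_le_abs_sub_add_abs_sub x y]

lemma side_anc (Q : DSquare) (k' : ℕ) (h : k' ≤ Q.k) :
    (Q.anc k' h).side = 2 ^ (Q.k - k') * Q.side := by
  simp only [side, anc]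
  rw [← Nat.sub_add_cancel h, pow_add, Nat.add_sub_cancel]
  field_simp

lemma le_mul_side_of_inWhitney {E : Set Pt} {r : ℝ}
    (hE : ∀ x ∈ E, ∀ y ∈ E, x ≠ y → r ≤ dist x y) {Q : DSquare} (hQ : InWhitney E Q)
    (hk : 0 < Q.k) : r ≤ 12 * Q.side := by
  have hpred : Q.k - 1 < Q.k := Nat.sub_one_lt_of_lt hk
  obtain ⟨x, ⟨hxQ, hxE⟩, y, ⟨hyQ, hyE⟩, hxy⟩ := Set.not_subsingleton_iff.mp (hQ.2 _ hpred)
  have hside : (Q.anc (Q.k - 1) hpred.le).side = 2 * Q.side := by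
    rw [side_anc, Nat.sub_sub_self hk, pow_one]
  calc r ≤ dist x y := hE x hxE y hyE hxy
    _ ≤ 2 * 3 * (Q.anc (Q.k - 1) hpred.le).side := dist_le_of_mem_dil hxQ hyQ
    _ = 12 * Q.side := by rw [hside]; ring

end DSquare

lemma pt_apply_one (a b : ℝ) : pt a b 1 = b := rfl

lemma le_dist_of_mem_E1set {Δ : ℝ} (hΔ : 0 ≤ Δ) {x y : Pt} (hx : x ∈ E1set Δ)
    (hy : y ∈ E1set Δ) (hxy : x ≠ y) : Δ ≤ dist x y := by
  obtain ⟨⟨n, hn⟩, -, hx1⟩ := hx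
  obtain ⟨⟨m, hm⟩, -, hy1⟩ := hy
  have hnm : n ≠ m := by
    rintro rfl
    exact hxy (PiLp.ext (Fin.forall_fin_two.mpr ⟨hn.trans hm.symm, hx1.trans hy1.symm⟩))
  have hone : (1 : ℝ) ≤ |(n : ℝ) - m| := by exact_mod_cast Int.one_le_abs (sub_ne_zero.mpr hnm)
  calc Δ ≤ |(n : ℝ) - m| * Δ := le_mul_of_one_le_left hΔ hone
    _ = |x 0 - y 0| := by rw [hn, hm, ← sub_mul, abs_mul, abs_of_nonneg hΔ]
    _ ≤ dist x y := abs_sub_apply_le_dist x y 0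

lemma List.exists_eq_append_cons_of_not_prefix {α : Type*} :
    ∀ {u v : List α}, ¬ u <+: v → ¬ v <+: u →
      ∃ p a b s t, a ≠ b ∧ u = p ++ a :: s ∧ v = p ++ b :: t
  | [], _, h, _ => absurd List.nil_prefix h
  | _ :: _, [], _, h => absurd List.nil_prefix h
  | a :: u, b :: v, hu, hv => by
    by_cases hab : a = b
    · subst hab
      obtain ⟨p, c, d, s, t, hcd, rfl, rfl⟩ := exists_eq_append_cons_of_not_prefix
        (fun h => hu (List.cons_prefix_cons.mpr ⟨rfl, h⟩))
        (fun h => hv (List.cons_prefix_cons.mpr ⟨rfl, h⟩))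
      exact ⟨a :: p, c, d, s, t, hcd, rfl, rfl⟩
    · exact ⟨[], a, b, u, v, hab, rfl, rfl⟩

lemma Psi_append_singleton (N : ℕ) (W : List ℕ → ℝ) (v : List ℕ) (a : ℕ) :
    Psi N W (v ++ [a]) = Psi N W v + W v * a / (N - 1) := by
  unfold Psi
  rw [List.length_append, List.length_singleton, Finset.sum_range_succ, List.take_left,
    List.getD_append_right _ _ _ _ le_rfl, Nat.sub_self, List.getD_cons_zero]
  congr 1
  refine Finset.sum_congr rfl fun i hi => ?_
  have hi : i < v.length := Finset.mem_range.mp hi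
  rw [List.take_append_of_le_length hi.le, List.getD_append _ _ _ _ hi]

section Tree

variable {N : ℕ} {V : Finset (List ℕ)} {W : List ℕ → ℝ} {ε : ℝ}

lemma IsNaryTree.mem_of_prefix (hV : IsNaryTree N V) {u v : List ℕ} (hv : v ∈ V)
    (h : u <+: v) : u ∈ V :=
  hV.2.1 v hv u h

lemma IsNaryTree.cast_le_sub_one (hV : IsNaryTree N V) {v : List ℕ} (hv : v ∈ V) {a : ℕ}
    (ha : a ∈ v) : (a : ℝ) ≤ N - 1 := by
  have : a + 1 ≤ N := hV.2.2.1 v hv a ha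
  have : (a : ℝ) + 1 ≤ N := by exact_mod_cast this
  linarith

lemma IsLeaf.eq_of_prefix (hV : IsNaryTree N V) {u v : List ℕ} (hu : IsLeaf V u)
    (hv : v ∈ V) (h : u <+: v) : u = v := by
  obtain ⟨_ | ⟨a, t⟩, rfl⟩ := h
  · exact (List.append_nil u).symm
  · exact absurd (hV.mem_of_prefix hv ⟨t, by simp⟩) (hu.2 a)

lemma RadiallyDecaying.le_mul_of_append_singleton (hW : RadiallyDecaying V W ε)
    {v : List ℕ} {a : ℕ} (h : v ++ [a] ∈ V) : W (v ++ [a]) ≤ ε * W v := by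
  simpa using hW.2.2 _ h (by simp)

lemma RadiallyDecaying.le_of_append (hV : IsNaryTree N V) (hW : RadiallyDecaying V W ε)
    (hε : ε ≤ 1) {p s : List ℕ} (h : p ++ s ∈ V) : W (p ++ s) ≤ W p := by
  induction s using List.reverseRecOn with
  | nil => simp
  | append_singleton s a ih =>
    rw [← List.append_assoc] at h ⊢
    have hps : p ++ s ∈ V := hV.mem_of_prefix h (List.prefix_append _ _)
    calc W (p ++ s ++ [a]) ≤ ε * W (p ++ s) := hW.le_mul_of_append_singleton h
      _ ≤ W (p ++ s) := mul_le_of_le_one_left (hW.2.1 _ hps).le hε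
      _ ≤ W p := ih hps

lemma Psi_le_Psi_append (hN : 1 ≤ N) (hV : IsNaryTree N V) (hW : RadiallyDecaying V W ε)
    {p s : List ℕ} (h : p ++ s ∈ V) : Psi N W p ≤ Psi N W (p ++ s) := by
  induction s using List.reverseRecOn with
  | nil => simp
  | append_singleton s a ih =>
    rw [← List.append_assoc] at h ⊢
    have hps : p ++ s ∈ V := hV.mem_of_prefix h (List.prefix_append _ _)
    have hN' : (1 : ℝ) ≤ N := by exact_mod_cast hN
    have : 0 ≤ W (p ++ s) * a / (N - 1) :=
      div_nonneg (mul_nonneg (hW.2.1 _ hps).le a.cast_nonneg) (by linarith)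
    rw [Psi_append_singleton]
    linarith [ih hps]

/-- Since a digit contributes at most the weight of its parent to `Psi` and weights decay by
`ε ≤ 1/2` along each edge, the quantity `Psi v + 2 W v` decreases down the tree. -/
lemma Psi_append_add_le (hN : 2 ≤ N) (hV : IsNaryTree N V) (hW : RadiallyDecaying V W ε)
    (hε : ε ≤ 1 / 2) {p s : List ℕ} (h : p ++ s ∈ V) :
    Psi N W (p ++ s) + 2 * W (p ++ s) ≤ Psi N W p + 2 * W p := by
  induction s using List.reverseRecOn with
  | nil => simp
  | append_singleton s a ih =>
    rw [← List.append_assoc] at h ⊢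
    have hps : p ++ s ∈ V := hV.mem_of_prefix h (List.prefix_append _ _)
    have hWps := (hW.2.1 _ hps).le
    have hN' : (2 : ℝ) ≤ N := by exact_mod_cast hN
    have ha : (a : ℝ) ≤ N - 1 := hV.cast_le_sub_one h (by simp)
    have hdigit : W (p ++ s) * a / (N - 1) ≤ W (p ++ s) := by
      rw [div_le_iff₀ (by linarith)]
      exact mul_le_mul_of_nonneg_left ha hWps
    rw [Psi_append_singleton]
    nlinarith [ih hps, hW.le_mul_of_append_singleton h]

lemma Psi_append_cons_bounds (hN : 2 ≤ N) (hV : IsNaryTree N V) (hW : RadiallyDecaying V W ε)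
    (hε : ε ≤ 1 / 2) {p s : List ℕ} {a : ℕ} (h : p ++ a :: s ∈ V) :
    Psi N W p + W p * a / (N - 1) ≤ Psi N W (p ++ a :: s) ∧
      Psi N W (p ++ a :: s) + 2 * W (p ++ a :: s) ≤
        Psi N W p + W p * a / (N - 1) + 2 * ε * W p := by
  rw [List.append_cons] at h ⊢
  have hpa : p ++ [a] ∈ V := hV.mem_of_prefix h (List.prefix_append _ _)
  rw [← Psi_append_singleton]
  refine ⟨Psi_le_Psi_append (by omega) hV hW h, ?_⟩
  linarith [Psi_append_add_le hN hV hW hε h, hW.le_mul_of_append_singleton hpa]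

lemma le_abs_Psi_sub_of_isLeaf (hN : 2 ≤ N) (hV : IsNaryTree N V)
    (hW : RadiallyDecaying V W ε) (hε : 3 * ε * (N - 1) ≤ 1) {u v : List ℕ}
    (hu : IsLeaf V u) (hv : IsLeaf V v) (huv : u ≠ v) :
    W u ≤ |Psi N W u - Psi N W v| := by
  obtain ⟨p, a, b, s, t, hab, rfl, rfl⟩ := List.exists_eq_append_cons_of_not_prefix
    (fun h => huv (hu.eq_of_prefix hV hv.1 h)) (fun h => huv (hv.eq_of_prefix hV hu.1 h).symm)
  have hN' : (2 : ℝ) ≤ N := by exact_mod_cast hN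
  have hε' : ε ≤ 1 / 2 := by nlinarith
  have hWp : 0 < W p := hW.2.1 p (hV.mem_of_prefix hu.1 (List.prefix_append _ _))
  have hWu : 0 < W (p ++ a :: s) := hW.2.1 _ hu.1
  have hWv : 0 < W (p ++ b :: t) := hW.2.1 _ hv.1
  -- distinct digits below `p` shift `Psi` by at least `W p / (N - 1) ≥ 3 ε W p`
  have hgap : ∀ c d : ℕ, c < d → 3 * ε * W p ≤ W p * d / (N - 1) - W p * c / (N - 1) := by
    intro c d hcd
    have hcd : (c : ℝ) + 1 ≤ d := by exact_mod_cast hcd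
    rw [← sub_div, le_div_iff₀ (by linarith)]
    nlinarith
  obtain ⟨hu₁, hu₂⟩ := Psi_append_cons_bounds hN hV hW hε' hu.1
  obtain ⟨hv₁, hv₂⟩ := Psi_append_cons_bounds hN hV hW hε' hv.1
  rcases Nat.lt_or_gt_of_ne hab with hlt | hlt
  · rw [abs_sub_comm]
    exact le_abs.mpr (Or.inl (by linarith [hgap a b hlt]))
  · exact le_abs.mpr (Or.inl (by linarith [hgap b a hlt]))

lemma Delta_nonneg (hW : RadiallyDecaying V W ε) : 0 ≤ Delta V W :=
  Real.sInf_nonneg fun _ ⟨v, hv, hw⟩ => hw ▸ (hW.2.1 v hv.1).le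

lemma Delta_le (hW : RadiallyDecaying V W ε) {v : List ℕ} (hv : IsLeaf V v) :
    Delta V W ≤ W v :=
  csInf_le ⟨0, fun _ ⟨u, hu, hw⟩ => hw ▸ (hW.2.1 u hu.1).le⟩ ⟨v, hv, rfl⟩

lemma Delta_le_one (hV : IsNaryTree N V) (hW : RadiallyDecaying V W ε) (hε : ε ≤ 1) :
    Delta V W ≤ 1 := by
  by_cases h : ∃ v, IsLeaf V v
  · obtain ⟨v, hv⟩ := h
    calc Delta V W ≤ W ([] ++ v) := Delta_le hW hv
      _ ≤ W [] := hW.le_of_append hV hε (by simpa using hv.1)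
      _ = 1 := hW.1
  · push Not at h
    have : {w : ℝ | ∃ v, IsLeaf V v ∧ w = W v} = ∅ :=
      Set.eq_empty_of_forall_notMem fun _ ⟨v, hv, _⟩ => h v hv
    rw [Delta, this, Real.sInf_empty]
    exact zero_le_one

lemma Delta_le_dist_of_mem_E1set_of_isLeaf (hW : RadiallyDecaying V W ε) {x : Pt}
    (hx : x ∈ E1set (Delta V W)) {u : List ℕ} (hu : IsLeaf V u) :
    Delta V W ≤ dist x (pt (Psi N W u) (W u)) :=
  calc Delta V W ≤ W u := Delta_le hW hu
    _ = |x 1 - pt (Psi N W u) (W u) 1| := by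
      rw [hx.2.2, pt_apply_one, zero_sub, abs_neg, abs_of_pos (hW.2.1 u hu.1)]
    _ ≤ _ := abs_sub_apply_le_dist _ _ 1

lemma Delta_le_dist_of_mem_Eset (hN : 2 ≤ N) (hV : IsNaryTree N V)
    (hW : RadiallyDecaying V W ε) (hε : 3 * ε * (N - 1) ≤ 1) :
    ∀ x ∈ Eset N V W, ∀ y ∈ Eset N V W, x ≠ y → Delta V W ≤ dist x y := by
  rintro x (hx | ⟨u, hu, rfl⟩) y (hy | ⟨v, hv, rfl⟩) hxy
  · exact le_dist_of_mem_E1set (Delta_nonneg hW) hx hy hxy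
  · exact Delta_le_dist_of_mem_E1set_of_isLeaf hW hx hv
  · rw [dist_comm]
    exact Delta_le_dist_of_mem_E1set_of_isLeaf hW hy hu
  · have huv : u ≠ v := by rintro rfl; exact hxy rfl
    calc Delta V W ≤ W u := Delta_le hW hu
      _ ≤ |Psi N W u - Psi N W v| := le_abs_Psi_sub_of_isLeaf hN hV hW hε hu hv huv
      _ ≤ _ := abs_sub_apply_le_dist (pt (Psi N W u) (W u)) (pt (Psi N W v) (W v)) 0

end Tree

/-- every Whitney square satisfies `δ_Q ≥ Δ/20`. -/
theorem statement6 :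
    ∃ k₀ : ℝ, 0 < k₀ ∧
      ∀ (N : ℕ) (V : Finset (List ℕ)) (W : List ℕ → ℝ) (ε : ℝ),
        TreeHyp k₀ N V W ε → DepthAtLeastOne V →
          ∀ Q : DSquare, InWhitney (Eset N V W) Q → Delta V W / 20 ≤ Q.side := by
  refine ⟨1 / 3, by norm_num, ?_⟩
  rintro N V W ε ⟨hN, hV, -, hεN, hW⟩ - Q hQ
  have hN' : (2 : ℝ) ≤ N := by exact_mod_cast hN
  have hε : 3 * ε * (N - 1) ≤ 1 := by
    rw [le_div_iff₀ (by linarith)] at hεN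
    nlinarith
  rcases Nat.eq_zero_or_pos Q.k with hk | hk
  · have hside : Q.side = 8 := by simp [DSquare.side, hk]
    linarith [Delta_le_one hV hW (by nlinarith)]
  · linarith [Q.side_pos,
      DSquare.le_mul_side_of_inWhitney (Delta_le_dist_of_mem_Eset hN hV hW hε) hQ hk]
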